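/- Assume ob satisfies all axioms 5(a), 5(b), 5(c) (strong), 5(d), 5(e). If a is bad, then ob equals avoidOnly_a, where avoidOnly_a(X) = {Y | X ∩ Y ≠ ∅ ∧ X \ {a} ⊆ X ∩ Y}. -/

import Mathlib

/-!
Axioms 5(a), 5(d), 5(e) make `ob univ` upward closed, and together with 5(b) they show that
`ob X` is `ob univ` seen through `X`: `Y ∈ ob X` iff `X ∩ Y` is nonempty and `Xᶜ ∪ Y ∈ ob univ`.
A bad world `a` puts `{a}ᶜ` into `ob univ`. If some `N ∈ ob univ` missed a world `b ≠ a`, then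
`{b}ᶜ ∈ ob univ` as well, and restricting `{a}ᶜ` and `{b}ᶜ` to `{a, b}` and intersecting them
(5(e), 5(c)) would make `∅` obligatory there. Hence `ob univ` consists of the supersets of `{a}ᶜ`.
-/

def avoidOnly {W : Type*} (a : W) (X : Set W) : Set (Set W) :=
  {Y | X ∩ Y ≠ ∅ ∧ X \ {a} ⊆ X ∩ Y}

section

variable {W : Type*} {ob : Set W → Set (Set W)}

open Set

lemma compl_singleton_subset_compl_union_iff (a : W) (X Y : Set W) :
    {a}ᶜ ⊆ Xᶜ ∪ Y ↔ X \ {a} ⊆ X ∩ Y := by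
  simp only [subset_def, mem_compl_iff, mem_union, mem_sdiff, mem_inter_iff, mem_singleton_iff]
  grind

lemma nonempty_of_mem_ob (h5a : ∀ X : Set W, ∅ ∉ ob X) {X Y : Set W} (hY : Y ∈ ob X) :
    Y.Nonempty :=
  nonempty_iff_ne_empty.mpr fun h ↦ h5a X (h ▸ hY)

lemma mem_ob_univ_of_subset (h5a : ∀ X : Set W, ∅ ∉ ob X)
    (h5d : ∀ X Y Z : Set W, Y ⊆ X → X ⊆ Z → Y ∈ ob X → (Z \ X) ∪ Y ∈ ob Z)
    (h5e : ∀ X Y Z : Set W, Y ⊆ X → Z ∈ ob X → Y ∩ Z ≠ ∅ → Z ∈ ob Y)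
    {M N : Set W} (hM : M ∈ ob univ) (hMN : M ⊆ N) : N ∈ ob univ := by
  -- restricting `M` to `Nᶜ ∪ M` and extending back to `univ` by 5(d) adds exactly `N \ M`
  have hM' : M ∈ ob (Nᶜ ∪ M) := h5e univ _ M (subset_univ _) hM <| by
    rw [union_inter_cancel_right]
    exact (nonempty_of_mem_ob h5a hM).ne_empty
  have hN : univ \ (Nᶜ ∪ M) ∪ M = N := by
    ext x
    have := @hMN x
    by_cases hx : x ∈ M <;> simp_all
  simpa only [hN] using h5d _ M univ subset_union_right (subset_univ _) hM'

lemma mem_ob_iff_compl_union_mem_ob_univ (h5a : ∀ X : Set W, ∅ ∉ ob X)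
    (h5b : ∀ X Y Z : Set W, Y ∩ X = Z ∩ X → (Y ∈ ob X ↔ Z ∈ ob X))
    (h5d : ∀ X Y Z : Set W, Y ⊆ X → X ⊆ Z → Y ∈ ob X → (Z \ X) ∪ Y ∈ ob Z)
    (h5e : ∀ X Y Z : Set W, Y ⊆ X → Z ∈ ob X → Y ∩ Z ≠ ∅ → Z ∈ ob Y) (X Y : Set W) :
    Y ∈ ob X ↔ (X ∩ Y).Nonempty ∧ Xᶜ ∪ Y ∈ ob univ := by
  constructor
  · intro hY
    have hYX : Y ∩ X ∈ ob X := (h5b X _ Y (by rw [inter_assoc, inter_self])).mpr hY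
    refine ⟨inter_comm Y X ▸ nonempty_of_mem_ob h5a hYX, ?_⟩
    have h := h5d X _ univ inter_subset_right (subset_univ _) hYX
    exact mem_ob_univ_of_subset h5a h5d h5e h fun x ↦ by grind
  · rintro ⟨hXY, hY⟩
    have h : Xᶜ ∪ Y ∈ ob X := h5e univ X _ (subset_univ _) hY <| by
      rw [inter_union_distrib_left, inter_compl_self, empty_union]
      exact hXY.ne_empty
    exact (h5b X Y _ (by rw [union_inter_distrib_right, compl_inter_self, empty_union])).mpr h

lemma eq_of_compl_singleton_mem_ob_univ (h5a : ∀ X : Set W, ∅ ∉ ob X)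
    (h5b : ∀ X Y Z : Set W, Y ∩ X = Z ∩ X → (Y ∈ ob X ↔ Z ∈ ob X))
    (h5c : ∀ X Y Z : Set W, Y ∈ ob X → Z ∈ ob X → Y ∩ Z ∈ ob X)
    (h5e : ∀ X Y Z : Set W, Y ⊆ X → Z ∈ ob X → Y ∩ Z ≠ ∅ → Z ∈ ob Y)
    {b c : W} (hb : {b}ᶜ ∈ ob univ) (hc : {c}ᶜ ∈ ob univ) : b = c := by
  by_contra hbc
  have hb' : {b}ᶜ ∈ ob {b, c} :=
    h5e univ _ _ (subset_univ _) hb (Set.Nonempty.ne_empty ⟨c, by simp [Ne.symm hbc]⟩)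
  have hc' : {c}ᶜ ∈ ob {b, c} :=
    h5e univ _ _ (subset_univ _) hc (Set.Nonempty.ne_empty ⟨b, by simp [hbc]⟩)
  have h := h5c _ _ _ hb' hc'
  refine h5a {b, c} ((h5b {b, c} _ _ ?_).mp h)
  ext x
  simp only [mem_inter_iff, mem_compl_iff, mem_singleton_iff, mem_insert_iff]
  grind

lemma compl_singleton_mem_ob_univ
    (h5d : ∀ X Y Z : Set W, Y ⊆ X → X ⊆ Z → Y ∈ ob X → (Z \ X) ∪ Y ∈ ob Z)
    {a : W} {X : Set W} (haX : a ∈ X) (h : X \ {a} ∈ ob X) : {a}ᶜ ∈ ob univ := by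
  have hX : univ \ X ∪ X \ {a} = {a}ᶜ := by
    ext x
    by_cases hx : x = a <;> simp [hx, haX, em']
  simpa only [hX] using h5d X _ univ sdiff_subset (subset_univ _) h

lemma mem_ob_univ_iff_compl_singleton_subset (h5a : ∀ X : Set W, ∅ ∉ ob X)
    (h5b : ∀ X Y Z : Set W, Y ∩ X = Z ∩ X → (Y ∈ ob X ↔ Z ∈ ob X))
    (h5c : ∀ X Y Z : Set W, Y ∈ ob X → Z ∈ ob X → Y ∩ Z ∈ ob X)
    (h5d : ∀ X Y Z : Set W, Y ⊆ X → X ⊆ Z → Y ∈ ob X → (Z \ X) ∪ Y ∈ ob Z)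
    (h5e : ∀ X Y Z : Set W, Y ⊆ X → Z ∈ ob X → Y ∩ Z ≠ ∅ → Z ∈ ob Y)
    {a : W} (ha : {a}ᶜ ∈ ob univ) (N : Set W) : N ∈ ob univ ↔ {a}ᶜ ⊆ N := by
  refine ⟨fun hN b hba ↦ ?_, mem_ob_univ_of_subset h5a h5d h5e ha⟩
  by_contra hbN
  have hb := mem_ob_univ_of_subset h5a h5d h5e hN (subset_compl_singleton_iff.mpr hbN)
  exact hba (eq_of_compl_singleton_mem_ob_univ h5a h5b h5c h5e hb ha)

end

theorem stmt18_general {W : Type*} (ob : Set W → Set (Set W)) (a : W)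
    (h5a : ∀ X : Set W, ∅ ∉ ob X)
    (h5b : ∀ X Y Z : Set W, Y ∩ X = Z ∩ X → (Y ∈ ob X ↔ Z ∈ ob X))
    (h5c : ∀ X Y Z : Set W, Y ∈ ob X → Z ∈ ob X → Y ∩ Z ∈ ob X)
    (h5d : ∀ X Y Z : Set W, Y ⊆ X → X ⊆ Z → Y ∈ ob X → (Z \ X) ∪ Y ∈ ob Z)
    (h5e : ∀ X Y Z : Set W, Y ⊆ X → Z ∈ ob X → Y ∩ Z ≠ ∅ → Z ∈ ob Y)
    (hbad : ∃ X : Set W, a ∈ X ∧ X \ {a} ∈ ob X) :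
    ob = avoidOnly a := by
  obtain ⟨X₀, haX₀, hX₀⟩ := hbad
  have ha := compl_singleton_mem_ob_univ h5d haX₀ hX₀
  ext X Y
  rw [mem_ob_iff_compl_union_mem_ob_univ h5a h5b h5d h5e,
    mem_ob_univ_iff_compl_singleton_subset h5a h5b h5c h5d h5e ha, avoidOnly, Set.mem_ofPred_eq,
    compl_singleton_subset_compl_union_iff, ← Set.nonempty_iff_ne_empty]

theorem stmt18 {W : Type*} [Fintype W] (ob : Set W → Set (Set W)) (a : W)
    (h5a : ∀ X : Set W, ∅ ∉ ob X)
    (h5b : ∀ X Y Z : Set W, Y ∩ X = Z ∩ X → (Y ∈ ob X ↔ Z ∈ ob X))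
    (h5c : ∀ X Y Z : Set W, Y ∈ ob X → Z ∈ ob X → Y ∩ Z ∈ ob X)
    (h5d : ∀ X Y Z : Set W, Y ⊆ X → X ⊆ Z → Y ∈ ob X → (Z \ X) ∪ Y ∈ ob Z)
    (h5e : ∀ X Y Z : Set W, Y ⊆ X → Z ∈ ob X → Y ∩ Z ≠ ∅ → Z ∈ ob Y)
    (hbad : ∃ X : Set W, a ∈ X ∧ X \ {a} ∈ ob X) :
    ob = avoidOnly a :=
  stmt18_general ob a h5a h5b h5c h5d h5e hbad
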